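/- If Z₊(X_G) = Z(X_G) ∩ Q₊(X_G), then Z₊(A_G) = Z(A_G) ∩ Q₊(A_G). That is, normality of the homogenized cut vector configuration implies that the cut vectors form a Hilbert basis. -/

import Mathlib

open Finset

variable {V : Type} [DecidableEq V]

def cutFun (S : Finset V) : Sym2 V → ℤ :=
  Sym2.lift ⟨fun i j => |(if i ∈ S then (1 : ℤ) else 0) - (if j ∈ S then (1 : ℤ) else 0)|,
    fun i j => abs_sub_comm _ _⟩

def zSpan {ι : Type} (B : Set (ι → ℤ)) : Set (ι → ℤ) :=
  {x | ∃ (s : Finset (ι → ℤ)) (c : (ι → ℤ) → ℤ), ↑s ⊆ B ∧ x = ∑ b ∈ s, c b • b}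

def zPlus {ι : Type} (B : Set (ι → ℤ)) : Set (ι → ℤ) :=
  {x | ∃ (s : Finset (ι → ℤ)) (c : (ι → ℤ) → ℤ), ↑s ⊆ B ∧ (∀ b ∈ s, 0 ≤ c b) ∧
    x = ∑ b ∈ s, c b • b}

def toQ {ι : Type} (x : ι → ℤ) : ι → ℚ := fun i => (x i : ℚ)

def qPlus {ι : Type} (B : Set (ι → ℤ)) : Set (ι → ℚ) :=
  {x | ∃ (s : Finset (ι → ℤ)) (c : (ι → ℤ) → ℚ), ↑s ⊆ B ∧ (∀ b ∈ s, 0 ≤ c b) ∧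
    x = ∑ b ∈ s, c b • toQ b}

def AG (G : SimpleGraph V) : Set (↥G.edgeSet → ℤ) :=
  {x | ∃ S : Finset V, x = fun e => cutFun S e.1}

def XG (G : SimpleGraph V) : Set (Option ↥G.edgeSet → ℤ) :=
  {x | ∃ S : Finset V, x = fun o => Option.elim o 1 (fun e => cutFun S e.1)}

def IsNormal (G : SimpleGraph V) : Prop :=
  zPlus (XG G) = zSpan (XG G) ∩ toQ ⁻¹' qPlus (XG G)

def IsMinor {W : Type} (H : SimpleGraph W) (G : SimpleGraph V) : Prop :=
  ∃ f : W → Set V,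
    (∀ w, (G.induce (f w)).Connected) ∧
    (Pairwise fun w₁ w₂ => Disjoint (f w₁) (f w₂)) ∧
    (∀ w₁ w₂, H.Adj w₁ w₂ → ∃ a ∈ f w₁, ∃ b ∈ f w₂, G.Adj a b)

open Classical in
noncomputable def extZ {G : SimpleGraph V} (x : ↥G.edgeSet → ℤ) : Sym2 V → ℤ :=
  fun e => if h : e ∈ G.edgeSet then x ⟨e, h⟩ else 0

open Classical in
noncomputable def extQ {G : SimpleGraph V} (x : ↥G.edgeSet → ℚ) : Sym2 V → ℚ :=
  fun e => if h : e ∈ G.edgeSet then x ⟨e, h⟩ else 0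

/-! Since `0 = δ_G(∅) ∈ A_G`, the configuration `X_G` contains `(0, 1)`. Forgetting the last
coordinate maps the integer span and the rational cone of `X_G` onto those of `A_G`, and adding
multiples of `(0, 1)` raises the last coordinate at will. So for `x ∈ Z(A_G) ∩ Q₊(A_G)` and any
integer `m` large enough, `(x, m) ∈ Z(X_G) ∩ Q₊(X_G)`; normality makes `(x, m)` a nonnegative integer
combination of the `(a_i, 1)`, and forgetting the last coordinate gives `x ∈ Z₊(A_G)`. -/

open Submodule

section Homogenization

-- `Option.elim' m x` is the vector `(x, m)`, the new coordinate sitting at `none`.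

variable {ι R K : Type*} [Semiring R] [AddCommMonoid K] [One K] [Module R K]

theorem map_funLeft_some_span_homogenize (B : Set (ι → K)) :
    (span R (Option.elim' 1 '' B)).map (LinearMap.funLeft R K some) = span R B := by
  rw [map_span, Set.image_image]
  exact congrArg _ (Set.image_id' B)

theorem exists_elim'_mem_span_homogenize {B : Set (ι → K)} {x : ι → K} (hx : x ∈ span R B) :
    ∃ t : K, Option.elim' t x ∈ span R (Option.elim' 1 '' B) := by
  rw [← map_funLeft_some_span_homogenize] at hx
  obtain ⟨z, hz, rfl⟩ := hx
  refine ⟨z none, ?_⟩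
  show Option.elim' (z none) (z ∘ some) ∈ _
  rwa [Option.elim'_none_some]

theorem mem_span_of_elim'_mem_span_homogenize {B : Set (ι → K)} {x : ι → K} {t : K}
    (h : Option.elim' t x ∈ span R (Option.elim' 1 '' B)) : x ∈ span R B := by
  rw [← map_funLeft_some_span_homogenize]
  exact ⟨_, h, rfl⟩

theorem elim'_add_smul_one_mem_span_homogenize {B : Set (ι → K)} (h0 : 0 ∈ B) {x : ι → K}
    {t : K} (h : Option.elim' t x ∈ span R (Option.elim' 1 '' B)) (r : R) :
    Option.elim' (t + r • 1) x ∈ span R (Option.elim' 1 '' B) := by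
  have hsplit : Option.elim' (t + r • 1) x = Option.elim' t x + r • Option.elim' 1 0 := by
    ext (_ | _) <;> simp
  rw [hsplit]
  exact add_mem h (smul_mem _ r (subset_span ⟨0, h0, rfl⟩))

end Homogenization

section Configurations

variable {ι : Type}

theorem zSpan_eq_span (B : Set (ι → ℤ)) : zSpan B = span ℤ B := by
  ext x
  refine ⟨?_, fun hx => ?_⟩
  · rintro ⟨s, c, hs, rfl⟩
    exact sum_mem fun b hb => smul_mem _ _ (subset_span (hs hb))
  · obtain ⟨c, s, hs, -, rfl⟩ := mem_span_iff_exists_finset_subset.1 hx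
    exact ⟨s, c, hs, rfl⟩

theorem zPlus_eq_span_nat (B : Set (ι → ℤ)) : zPlus B = span ℕ B := by
  ext x
  refine ⟨?_, fun hx => ?_⟩
  · rintro ⟨s, c, hs, hc, rfl⟩
    refine sum_mem fun b hb => ?_
    rw [← Int.toNat_of_nonneg (hc b hb), natCast_zsmul]
    exact smul_mem _ _ (subset_span (hs hb))
  · obtain ⟨c, s, hs, -, rfl⟩ := mem_span_iff_exists_finset_subset.1 hx
    exact ⟨s, fun b => c b, hs, fun b _ => Int.natCast_nonneg _, by simp only [natCast_zsmul]⟩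

theorem toQ_injective : Function.Injective (toQ (ι := ι)) :=
  fun _ _ h => funext fun i => Int.cast_injective (congrFun h i)

theorem qPlus_eq_hull (B : Set (ι → ℤ)) : qPlus B = PointedCone.hull ℚ (toQ '' B) := by
  classical
  ext y
  refine ⟨?_, fun hy => ?_⟩
  · rintro ⟨s, c, hs, hc, rfl⟩
    exact sum_mem fun b hb =>
      smul_mem _ (⟨c b, hc b hb⟩ : {q : ℚ // 0 ≤ q}) (subset_span ⟨b, hs hb, rfl⟩)
  · obtain ⟨c, t, ht, -, rfl⟩ := mem_span_iff_exists_finset_subset.1 hy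
    obtain ⟨s, hs, rfl⟩ := Finset.subset_set_image_iff.1 ht
    refine ⟨s, fun b => c (toQ b), hs, fun b _ => (c (toQ b)).2, ?_⟩
    rw [Finset.sum_image toQ_injective.injOn]
    rfl

theorem zPlus_subset_zSpan_inter_qPlus (B : Set (ι → ℤ)) :
    zPlus B ⊆ zSpan B ∩ toQ ⁻¹' qPlus B := by
  rintro _ ⟨s, c, hs, hc, rfl⟩
  refine ⟨⟨s, c, hs, rfl⟩, s, fun b => c b, hs, fun b hb => Int.cast_nonneg (hc b hb), ?_⟩
  ext i
  simp [toQ]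

theorem toQ_elim' (m : ℤ) (x : ι → ℤ) :
    toQ (Option.elim' m x) = Option.elim' (m : ℚ) (toQ x) := by
  ext (_ | _) <;> rfl

theorem image_toQ_homogenize (B : Set (ι → ℤ)) :
    toQ '' (Option.elim' 1 '' B) = Option.elim' 1 '' (toQ '' B) := by
  simp only [Set.image_image, toQ_elim', Int.cast_one]

theorem zero_mem_image_toQ {B : Set (ι → ℤ)} (h0 : 0 ∈ B) : 0 ∈ toQ '' B :=
  ⟨0, h0, funext fun _ => Int.cast_zero⟩

theorem zPlus_eq_of_zPlus_homogenize_eq {B : Set (ι → ℤ)} (h0 : 0 ∈ B)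
    (h : zPlus (Option.elim' 1 '' B) =
      zSpan (Option.elim' 1 '' B) ∩ toQ ⁻¹' qPlus (Option.elim' 1 '' B)) :
    zPlus B = zSpan B ∩ toQ ⁻¹' qPlus B := by
  refine (zPlus_subset_zSpan_inter_qPlus B).antisymm ?_
  rintro x ⟨hx, hxq⟩
  rw [zSpan_eq_span] at hx
  rw [Set.mem_preimage, qPlus_eq_hull] at hxq
  obtain ⟨t, ht⟩ := exists_elim'_mem_span_homogenize hx
  obtain ⟨q, hq⟩ := exists_elim'_mem_span_homogenize hxq
  set m := ⌈q⌉
  have hmZ : Option.elim' m x ∈ span ℤ (Option.elim' 1 '' B) := by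
    simpa using elim'_add_smul_one_mem_span_homogenize h0 ht (m - t)
  have hmQ :
      Option.elim' (m : ℚ) (toQ x) ∈ PointedCone.hull ℚ (Option.elim' 1 '' (toQ '' B)) := by
    simpa using elim'_add_smul_one_mem_span_homogenize (zero_mem_image_toQ h0) hq
      ⟨m - q, sub_nonneg.2 (Int.le_ceil q)⟩
  have hm : Option.elim' m x ∈ zPlus (Option.elim' 1 '' B) := by
    rw [h, zSpan_eq_span, qPlus_eq_hull, image_toQ_homogenize]
    exact ⟨hmZ, by rwa [Set.mem_preimage, toQ_elim']⟩
  rw [zPlus_eq_span_nat] at hm ⊢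
  exact mem_span_of_elim'_mem_span_homogenize hm

end Configurations

theorem XG_eq_image_AG (G : SimpleGraph V) : XG G = Option.elim' 1 '' AG G := by
  ext y
  constructor
  · rintro ⟨S, rfl⟩
    exact ⟨_, ⟨S, rfl⟩, funext (Option.elim'_eq_elim _ _)⟩
  · rintro ⟨_, ⟨S, rfl⟩, rfl⟩
    exact ⟨S, funext (Option.elim'_eq_elim _ _)⟩

theorem cutFun_empty : cutFun (∅ : Finset V) = 0 := by
  ext e
  induction e using Sym2.ind
  simp [cutFun]

theorem zero_mem_AG (G : SimpleGraph V) : 0 ∈ AG G :=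
  ⟨∅, by ext; simp [cutFun_empty]⟩

theorem stmt0 (G : SimpleGraph V)
    (h : zPlus (XG G) = zSpan (XG G) ∩ toQ ⁻¹' qPlus (XG G)) :
    zPlus (AG G) = zSpan (AG G) ∩ toQ ⁻¹' qPlus (AG G) := by
  rw [XG_eq_image_AG] at h
  exact zPlus_eq_of_zPlus_homogenize_eq (zero_mem_AG G) h
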